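/- arXiv:1002.1741 — 4 statements merged into one kernel-verified Lean document; each statement's English description precedes it below -/
import Mathlib

section
/- Let U_n(s) be the unitary propagator solving iε U̇_n(s) = H_n(s) U_n(s), U_n(0) = I, with generator H_n(s) = H(s) + iε[Ṗ(s),P(s)], where P(s) is a differentiable family of orthogonal projections and ‖[H(s),P(s)]‖ ≤ δ for all s ∈ [0,1]. Then ‖U_n(s)* P(s) U_n(s) − P(0)‖ ≤ s δ/ε for all s ∈ [0,1]. -/
/-!
For a differentiable family of projections, `Ṗ = ṖP + PṖ` forces `PṖP = 0` and hence
`[[Ṗ, P], P] = Ṗ`. In the Heisenberg picture `d/ds (U⁻¹ P U) = U⁻¹ (Ṗ + [P, A]) U` with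
`A = -(i/ε) H_n`, Kato's term `iε[Ṗ, P]` in `H_n` therefore cancels `Ṗ` exactly, leaving
`(i/ε) U* [H, P] U`. Since conjugation by a unitary is isometric, this derivative has norm at most
`δ/ε` on `[0, 1]`, and the mean value inequality gives the bound.
-/

open ContinuousLinearMap

namespace IsIdempotentElem

variable {R : Type*} [Ring R] {p q : R}

lemma mul_mul_eq_zero_of_mul_add_mul_eq (hp : IsIdempotentElem p) (hq : q * p + p * q = q) :
    p * q * p = 0 := by
  have h : p * (q * p + p * q) * p = p * q * p + p * q * p := by
    calc p * (q * p + p * q) * p = p * q * (p * p) + (p * p) * q * p := by noncomm_ring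
      _ = p * q * p + p * q * p := by rw [hp.eq]
  rw [hq] at h
  simpa using h

lemma commutator_commutator_eq (hp : IsIdempotentElem p) (hq : q * p + p * q = q) :
    (q * p - p * q) * p - p * (q * p - p * q) = q := by
  calc (q * p - p * q) * p - p * (q * p - p * q)
      = q * (p * p) + (p * p) * q - 2 * (p * q * p) := by noncomm_ring
    _ = q := by rw [hp.eq, hp.mul_mul_eq_zero_of_mul_add_mul_eq hq, hq]; simp

lemma add_commutator_smul_add_commutator_eq {𝕜 : Type*} [CommRing 𝕜] [Algebra 𝕜 R]
    (hp : IsIdempotentElem p) (hq : q * p + p * q = q) {c d : 𝕜} (hcd : c * d = 1) (h : R) :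
    q + p * (c • (h + d • (q * p - p * q))) - c • (h + d • (q * p - p * q)) * p =
      (-c) • (h * p - p * h) := by
  have hK := hp.commutator_commutator_eq hq
  calc q + p * (c • (h + d • (q * p - p * q))) - c • (h + d • (q * p - p * q)) * p
      = q - (c * d) • ((q * p - p * q) * p - p * (q * p - p * q)) - c • (h * p - p * h) := by
        simp only [mul_smul_comm, smul_mul_assoc, mul_add, add_mul, smul_add, smul_sub, mul_sub,
          sub_mul, smul_smul]
        abel
    _ = (-c) • (h * p - p * h) := by rw [hK, hcd, one_smul, sub_self, zero_sub, neg_smul]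

end IsIdempotentElem

section Derivatives

variable {𝔸 : Type*} [NormedRing 𝔸] [NormedAlgebra ℝ 𝔸] {s : ℝ}

lemma HasDerivAt.mul_add_mul_eq_of_isIdempotentElem {P : ℝ → 𝔸} {P' : 𝔸}
    (hP : ∀ t, IsIdempotentElem (P t)) (h : HasDerivAt P P' s) : P' * P s + P s * P' = P' := by
  have hPP : HasDerivAt (fun t => P t * P t) (P' * P s + P s * P') s := h.mul h
  simp only [fun t => (hP t).eq] at hPP
  exact hPP.unique h

lemma HasDerivAt.inverse_of_mul_eq_one [CompleteSpace 𝔸] {U V : ℝ → 𝔸} {U' : 𝔸}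
    (hU : HasDerivAt U U' s) (hVU : ∀ t, V t * U t = 1) (hUV : ∀ t, U t * V t = 1) :
    HasDerivAt V (-(V s * U' * V s)) s := by
  let u : ℝ → 𝔸ˣ := fun t => ⟨U t, V t, hUV t, hVU t⟩
  have hV : Ring.inverse ∘ U = V := funext fun t => Ring.inverse_unit (u t)
  have hinv := hasFDerivAt_ringInverse (𝕜 := ℝ) (u s)
  simpa [hV, u] using hinv.comp_hasDerivAt s hU

lemma HasDerivAt.heisenberg_picture [CompleteSpace 𝔸] {U V P : ℝ → 𝔸} {A P' : 𝔸}
    (hU : HasDerivAt U (A * U s) s) (hVU : ∀ t, V t * U t = 1) (hUV : ∀ t, U t * V t = 1)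
    (hP : HasDerivAt P P' s) :
    HasDerivAt (fun t => V t * P t * U t) (V s * (P' + P s * A - A * P s) * U s) s := by
  refine (((hU.inverse_of_mul_eq_one hVU hUV).mul hP).mul hU).congr_deriv ?_
  calc (-(V s * (A * U s) * V s) * P s + V s * P') * U s + V s * P s * (A * U s)
      = V s * P' * U s + V s * P s * A * U s - V s * A * (U s * V s) * P s * U s := by
        noncomm_ring
    _ = V s * (P' + P s * A - A * P s) * U s := by rw [hUV s]; noncomm_ring

end Derivatives

theorem nearly_adiabatic_intertwining_general
    {𝓗 : Type*} [NormedAddCommGroup 𝓗] [InnerProductSpace ℂ 𝓗] [CompleteSpace 𝓗]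
    (H P P' U : ℝ → 𝓗 →L[ℂ] 𝓗) (ε δ : ℝ)
    (hε : 0 < ε)
    (hproj : ∀ s, (P s) * (P s) = P s)
    (hPderiv : ∀ s, HasDerivAt P (P' s) s)
    -- unitarity of the propagator
    (hU1 : ∀ s, adjoint (U s) * U s = 1)
    (hU2 : ∀ s, U s * adjoint (U s) = 1)
    (hU0 : U 0 = 1)
    -- `iε U̇_n(s) = H_n(s) U_n(s)` with `H_n(s) = H(s) + iε[Ṗ(s),P(s)]`
    (hUderiv : ∀ s, HasDerivAt U
      ((-(Complex.I) / (ε : ℂ)) •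
        ((H s + (Complex.I * (ε : ℂ)) • (P' s * P s - P s * P' s)) * U s)) s)
    (hcomm : ∀ s ∈ Set.Icc (0 : ℝ) 1, ‖H s * P s - P s * H s‖ ≤ δ) :
    ∀ s ∈ Set.Icc (0 : ℝ) 1,
      ‖adjoint (U s) * P s * U s - P 0‖ ≤ s * δ / ε := by
  set c : ℂ := -Complex.I / ε
  have hcd : c * (Complex.I * ε) = 1 := by
    have : (ε : ℂ) ≠ 0 := by exact_mod_cast hε.ne'
    simp only [c]
    field_simp
    rw [Complex.I_sq]
    ring
  have hunitary (t : ℝ) : U t ∈ unitary (𝓗 →L[ℂ] 𝓗) :=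
    Unitary.mem_iff.2 ⟨by rw [star_eq_adjoint, hU1], by rw [star_eq_adjoint, hU2]⟩
  have hderiv (t : ℝ) : HasDerivAt (fun r => adjoint (U r) * P r * U r)
      ((-c) • (adjoint (U t) * (H t * P t - P t * H t) * U t)) t := by
    have hU : HasDerivAt U
        (c • (H t + (Complex.I * ε) • (P' t * P t - P t * P' t)) * U t) t := by
      simpa only [smul_mul_assoc] using hUderiv t
    have hPP' := (hPderiv t).mul_add_mul_eq_of_isIdempotentElem hproj
    have h := hU.heisenberg_picture (V := fun r => adjoint (U r)) hU1 hU2 (hPderiv t)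
    rwa [IsIdempotentElem.add_commutator_smul_add_commutator_eq (hproj t) hPP' hcd, mul_smul_comm,
      smul_mul_assoc] at h
  have hbound (t : ℝ) (ht : t ∈ Set.Icc (0 : ℝ) 1) :
      ‖(-c) • (adjoint (U t) * (H t * P t - P t * H t) * U t)‖ ≤ δ / ε := by
    have hc : ‖-c‖ = ε⁻¹ := by simp [c, abs_of_pos hε]
    rw [norm_smul, hc, CStarRing.norm_mul_mem_unitary _ (hunitary t), ← star_eq_adjoint,
      CStarRing.norm_mem_unitary_mul _ (Unitary.star_mem (hunitary t)), div_eq_inv_mul]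
    exact mul_le_mul_of_nonneg_left (hcomm t ht) (inv_nonneg.2 hε.le)
  intro s hs
  have h := norm_image_sub_le_of_norm_deriv_le_segment' (fun t _ => (hderiv t).hasDerivWithinAt)
    (fun t ht => hbound t (Set.Ico_subset_Icc_self ht)) s hs
  rwa [hU0, adjoint_one, one_mul, mul_one, sub_zero, div_mul_eq_mul_div, mul_comm δ] at h

/-- For the nearly adiabatic evolution `U_n` generated by
`H_n(s) = H(s) + iε[Ṗ(s),P(s)]`, if `‖[H(s),P(s)]‖ ≤ δ` on `[0,1]`, then
`‖U_n(s)* P(s) U_n(s) − P(0)‖ ≤ s δ/ε` on `[0,1]`. -/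
theorem nearly_adiabatic_intertwining
    {𝓗 : Type*} [NormedAddCommGroup 𝓗] [InnerProductSpace ℂ 𝓗] [CompleteSpace 𝓗]
    (H P P' U : ℝ → 𝓗 →L[ℂ] 𝓗) (ε δ : ℝ)
    (hε : 0 < ε) (hδ : 0 ≤ δ)
    (hHsa : ∀ s, IsSelfAdjoint (H s))
    (hproj : ∀ s, (P s) * (P s) = P s)
    (hPsa : ∀ s, IsSelfAdjoint (P s))
    (hPderiv : ∀ s, HasDerivAt P (P' s) s)
    -- unitarity of the propagator
    (hU1 : ∀ s, adjoint (U s) * U s = 1)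
    (hU2 : ∀ s, U s * adjoint (U s) = 1)
    (hU0 : U 0 = 1)
    -- `iε U̇_n(s) = H_n(s) U_n(s)` with `H_n(s) = H(s) + iε[Ṗ(s),P(s)]`
    (hUderiv : ∀ s, HasDerivAt U
      ((-(Complex.I) / (ε : ℂ)) •
        ((H s + (Complex.I * (ε : ℂ)) • (P' s * P s - P s * P' s)) * U s)) s)
    (hcomm : ∀ s ∈ Set.Icc (0 : ℝ) 1, ‖H s * P s - P s * H s‖ ≤ δ) :
    ∀ s ∈ Set.Icc (0 : ℝ) 1,
      ‖adjoint (U s) * P s * U s - P 0‖ ≤ s * δ / ε :=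
  nearly_adiabatic_intertwining_general H P P' U ε δ hε hproj hPderiv hU1 hU2 hU0 hUderiv hcomm
end

section
/- Let U_ε(s) be a unitary family, X(s) a C¹ family of bounded operators, and Ω(s) a unitary family with Ω̇(s) = K(s)Ω(s) where ‖K(s)‖ ≤ 2M. If U_ε(r)*[X(r),H(r)]U_ε(r) = iε (d/dr)(U_ε(r)* X(r) U_ε(r)) − iε U_ε(r)* Ẋ(r) U_ε(r), then ‖∫₀ˢ U_ε(r)*[X(r),H(r)]U_ε(r)Ω(r) dr‖ ≤ ε ( max_r‖Ẋ(r)‖ + 2 max_r‖X(r)‖ + 2M max_r‖X(r)‖ ) for s ∈ [0,1]. -/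
/-!
Write `F = U* X U`, so that `Ḟ = D`. By hypothesis the integrand is `iε (D - U* Ẋ U) Ω`, and by
the product rule `D Ω = (F Ω)' - F K Ω`. Hence the integral is
`iε (F Ω |₀ˢ - ∫₀ˢ (F K Ω + U* Ẋ U Ω))`, and since `U` and `Ω` have norm at most one, the
boundary term is at most `2 max ‖X‖` and the remaining integrand at most `2M max ‖X‖ + max ‖Ẋ‖`.
-/

open ContinuousLinearMap MeasureTheory

theorem CStarRing.norm_le_one_of_star_mul_self_eq_one {E : Type*} [NormedRing E] [StarRing E]
    [CStarRing E] {u : E} (hu : star u * u = 1) : ‖u‖ ≤ 1 := by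
  have hu' : ‖u‖ * ‖u‖ = ‖(1 : E)‖ := by rw [← norm_star_mul_self, hu]
  -- `‖1‖ = ‖1‖ ^ 2`, so `‖1‖ ∈ {0, 1}`
  have h1 : ‖(1 : E)‖ * ‖(1 : E)‖ = ‖(1 : E)‖ := by
    rw [← norm_star_mul_self, star_one, one_mul]
  have h1' : ‖(1 : E)‖ ≤ 1 := by nlinarith [norm_nonneg (1 : E)]
  nlinarith [norm_nonneg u]

theorem norm_star_mul_mul_le {E : Type*} [NormedRing E] [StarRing E] [NormedStarGroup E]
    {u : E} (hu : ‖u‖ ≤ 1) (x : E) : ‖star u * x * u‖ ≤ ‖x‖ :=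
  calc ‖star u * x * u‖ ≤ ‖star u‖ * ‖x‖ * ‖u‖ := norm_mul₃_le
    _ ≤ 1 * ‖x‖ * 1 := by gcongr; rwa [norm_star]
    _ = ‖x‖ := by ring

theorem norm_intervalIntegral_deriv_sub_le {E : Type*} [NormedAddCommGroup E] [NormedSpace ℝ E]
    [CompleteSpace E] {g g' p : ℝ → E} {C a b : ℝ} (hg : ∀ r, HasDerivAt g (g' r) r)
    (hp : ∀ r, ‖p r‖ ≤ C) :
    ‖∫ r in a..b, (g' r - p r)‖ ≤ ‖g b - g a‖ + C * |b - a| := by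
  have hC : 0 ≤ C := (norm_nonneg _).trans (hp 0)
  by_cases hint : IntervalIntegrable (fun r => g' r - p r) volume a b
  swap
  · rw [intervalIntegral.integral_undef hint, norm_zero]
    positivity
  have hg'meas : StronglyMeasurable g' := by
    rw [show g' = deriv g from funext fun r => (hg r).deriv.symm]
    exact stronglyMeasurable_deriv g
  -- `p = g' - (g' - p)` is bounded and measurable, `g'` being a derivative
  have hpint : IntervalIntegrable p volume a b := by
    have hmeas : AEStronglyMeasurable p (volume.restrict (Set.uIoc a b)) := by
      refine (hg'meas.aestronglyMeasurable.sub hint.def'.aestronglyMeasurable).congr ?_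
      exact Filter.Eventually.of_forall fun r => sub_sub_cancel (g' r) (p r)
    exact intervalIntegrable_const.mono_fun' hmeas (Filter.Eventually.of_forall hp)
  have hg'int : IntervalIntegrable g' volume a b := by simpa using hint.add hpint
  rw [intervalIntegral.integral_sub hg'int hpint,
    intervalIntegral.integral_eq_sub_of_hasDerivAt (fun r _ => hg r) hg'int]
  calc _ ≤ ‖g b - g a‖ + ‖∫ r in a..b, p r‖ := norm_sub_le _ _
    _ ≤ ‖g b - g a‖ + C * |b - a| := by
      gcongr
      exact intervalIntegral.norm_integral_le_of_norm_le_const fun r _ => hp r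

theorem norm_intervalIntegral_sub_mul_le_of_hasDerivAt {E : Type*} [NormedRing E]
    [NormedAlgebra ℝ E] [CompleteSpace E] {F D A Ω K : ℝ → E} {cF cA cK a b : ℝ}
    (hF : ∀ r, HasDerivAt F (D r) r) (hΩ : ∀ r, HasDerivAt Ω (K r * Ω r) r)
    (hFb : ∀ r, ‖F r‖ ≤ cF) (hAb : ∀ r, ‖A r‖ ≤ cA) (hKb : ∀ r, ‖K r‖ ≤ cK)
    (hΩb : ∀ r, ‖Ω r‖ ≤ 1) :
    ‖∫ r in a..b, (D r - A r) * Ω r‖ ≤ 2 * cF + (cF * cK + cA) * |b - a| := by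
  have hcF : 0 ≤ cF := (norm_nonneg _).trans (hFb 0)
  have hmulΩ : ∀ x r, ‖x * Ω r‖ ≤ ‖x‖ := fun x r =>
    (norm_mul_le _ _).trans (mul_le_of_le_one_right (norm_nonneg _) (hΩb r))
  have hFΩ : ∀ r, ‖F r * Ω r‖ ≤ cF := fun r => (hmulΩ _ r).trans (hFb r)
  have hp : ∀ r, ‖F r * (K r * Ω r) + A r * Ω r‖ ≤ cF * cK + cA := fun r =>
    calc _ ≤ ‖F r‖ * ‖K r * Ω r‖ + ‖A r * Ω r‖ :=
          (norm_add_le _ _).trans (add_le_add_left (norm_mul_le _ _) _)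
      _ ≤ cF * cK + cA := by
        gcongr
        exacts [hFb r, (hmulΩ _ r).trans (hKb r), (hmulΩ _ r).trans (hAb r)]
  have hsplit : ∀ r, (D r - A r) * Ω r =
      (D r * Ω r + F r * (K r * Ω r)) - (F r * (K r * Ω r) + A r * Ω r) := by
    intro r; noncomm_ring
  simp_rw [hsplit]
  calc _ ≤ ‖F b * Ω b - F a * Ω a‖ + (cF * cK + cA) * |b - a| :=
        norm_intervalIntegral_deriv_sub_le (fun r => (hF r).mul (hΩ r)) hp
    _ ≤ 2 * cF + (cF * cK + cA) * |b - a| := by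
      gcongr
      linarith [norm_sub_le (F b * Ω b) (F a * Ω a), hFΩ a, hFΩ b]

theorem integration_by_parts_bound_general
    {𝓗 : Type*} [NormedAddCommGroup 𝓗] [InnerProductSpace ℂ 𝓗] [CompleteSpace 𝓗]
    (H X X' Uε Ω K D : ℝ → 𝓗 →L[ℂ] 𝓗) (ε M MX MX' : ℝ)
    (hε : 0 < ε)
    (hUεunit : ∀ r, adjoint (Uε r) * Uε r = 1 ∧ Uε r * adjoint (Uε r) = 1)
    (hΩunit : ∀ r, adjoint (Ω r) * Ω r = 1 ∧ Ω r * adjoint (Ω r) = 1)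
    (hXbound : ∀ r, ‖X r‖ ≤ MX)
    (hX'bound : ∀ r, ‖X' r‖ ≤ MX')
    (hΩderiv : ∀ r, HasDerivAt Ω (K r * Ω r) r)
    (hKbound : ∀ r, ‖K r‖ ≤ 2 * M)
    -- integration-by-parts identity:
    (hD : ∀ r, HasDerivAt (fun t => adjoint (Uε t) * X t * Uε t) (D r) r)
    (hibp : ∀ r,
      adjoint (Uε r) * (X r * H r - H r * X r) * Uε r =
        (Complex.I * (ε : ℂ)) • D r
          - (Complex.I * (ε : ℂ)) • (adjoint (Uε r) * X' r * Uε r)) :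
    ∀ s ∈ Set.Icc (0:ℝ) 1,
      ‖∫ r in (0:ℝ)..s,
          adjoint (Uε r) * (X r * H r - H r * X r) * Uε r * Ω r‖ ≤
        ε * (MX' + 2 * MX + 2 * M * MX) := by
  rintro s ⟨hs0, hs1⟩
  have hU : ∀ r, ‖Uε r‖ ≤ 1 := fun r =>
    CStarRing.norm_le_one_of_star_mul_self_eq_one (by rw [star_eq_adjoint]; exact (hUεunit r).1)
  have hΩ : ∀ r, ‖Ω r‖ ≤ 1 := fun r =>
    CStarRing.norm_le_one_of_star_mul_self_eq_one (by rw [star_eq_adjoint]; exact (hΩunit r).1)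
  have hconj : ∀ Y r, ‖adjoint (Uε r) * Y * Uε r‖ ≤ ‖Y‖ := fun Y r => by
    rw [← star_eq_adjoint]; exact norm_star_mul_mul_le (hU r) Y
  have hcomm : ∀ r, adjoint (Uε r) * (X r * H r - H r * X r) * Uε r * Ω r =
      (Complex.I * (ε : ℂ)) • ((D r - adjoint (Uε r) * X' r * Uε r) * Ω r) := by
    intro r; rw [hibp r, ← smul_sub, smul_mul_assoc]
  have hMX : 0 ≤ MX := (norm_nonneg _).trans (hXbound 0)
  have hM : 0 ≤ 2 * M := (norm_nonneg _).trans (hKbound 0)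
  have hMX' : 0 ≤ MX' := (norm_nonneg _).trans (hX'bound 0)
  simp_rw [hcomm]
  rw [intervalIntegral.integral_smul, norm_smul, norm_mul, Complex.norm_I, Complex.norm_real,
    Real.norm_of_nonneg hε.le, one_mul]
  calc _ ≤ ε * (2 * MX + (MX * (2 * M) + MX') * |s - 0|) := by
        gcongr
        exact norm_intervalIntegral_sub_mul_le_of_hasDerivAt hD hΩderiv
          (fun r => (hconj _ r).trans (hXbound r)) (fun r => (hconj _ r).trans (hX'bound r))
          hKbound hΩ
    _ ≤ ε * (MX' + 2 * MX + 2 * M * MX) := by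
      rw [sub_zero, abs_of_nonneg hs0]
      refine mul_le_mul_of_nonneg_left ?_ hε.le
      nlinarith [mul_nonneg hMX hM]

/-- Integration-by-parts bound for the Volterra integral:
if `U_ε(r)*[X(r),H(r)]U_ε(r) = iε (d/dr)(U_ε* X U_ε) − iε U_ε* Ẋ U_ε`, and
`Ω̇ = KΩ` with `‖K‖ ≤ 2M`, then on `[0,1]`,
`‖∫₀ˢ U_ε*[X,H]U_ε Ω dr‖ ≤ ε (max‖Ẋ‖ + 2 max‖X‖ + 2M max‖X‖)`. -/
theorem integration_by_parts_bound
    {𝓗 : Type*} [NormedAddCommGroup 𝓗] [InnerProductSpace ℂ 𝓗] [CompleteSpace 𝓗]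
    (H X X' Uε Ω K D : ℝ → 𝓗 →L[ℂ] 𝓗) (ε M MX MX' : ℝ)
    (hε : 0 < ε) (hM : 0 ≤ M)
    (hHsa : ∀ r, IsSelfAdjoint (H r))
    (hUεunit : ∀ r, adjoint (Uε r) * Uε r = 1 ∧ Uε r * adjoint (Uε r) = 1)
    (hΩunit : ∀ r, adjoint (Ω r) * Ω r = 1 ∧ Ω r * adjoint (Ω r) = 1)
    (hXderiv : ∀ r, HasDerivAt X (X' r) r)
    (hXbound : ∀ r, ‖X r‖ ≤ MX)
    (hX'bound : ∀ r, ‖X' r‖ ≤ MX')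
    (hΩderiv : ∀ r, HasDerivAt Ω (K r * Ω r) r)
    (hKbound : ∀ r, ‖K r‖ ≤ 2 * M)
    -- integration-by-parts identity:
    (hD : ∀ r, HasDerivAt (fun t => adjoint (Uε t) * X t * Uε t) (D r) r)
    (hibp : ∀ r,
      adjoint (Uε r) * (X r * H r - H r * X r) * Uε r =
        (Complex.I * (ε : ℂ)) • D r
          - (Complex.I * (ε : ℂ)) • (adjoint (Uε r) * X' r * Uε r)) :
    ∀ s ∈ Set.Icc (0:ℝ) 1,
      ‖∫ r in (0:ℝ)..s,
          adjoint (Uε r) * (X r * H r - H r * X r) * Uε r * Ω r‖ ≤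
        ε * (MX' + 2 * MX + 2 * M * MX) :=
  integration_by_parts_bound_general H X X' Uε Ω K D ε M MX MX' hε hUεunit hΩunit hXbound hX'bound
    hΩderiv hKbound hD hibp
end

section
/- Let H be self-adjoint, E ∈ ℝ with E in the resolvent set's complement, and suppose ‖(H−E)P‖ ≤ δ/2 for an orthogonal projection P. Let g be a C⁴ compactly supported function with g(E) = 1. Then ‖(g(H) − I)P‖ ≤ C_g · δ, where C_g depends only on integrals of derivatives of g (the Helffer–Sjöstrand norm |||g|||₃). -/
/-!
If `R z` inverts `H - z` and `‖R z‖ ≤ |Im z|⁻¹`, then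
`R z - (E - z)⁻¹ = -(E - z)⁻¹ R z (H - E)`, and since `|E - z| ≥ |Im z|` this gives
`‖(R z - (E - z)⁻¹) P‖ ≤ ‖(H - E) P‖ / |Im z|²`. Integrating against `∂_z̄ g̃` and using
`∫ ∂_z̄ g̃(z) (E - z)⁻¹ = g(E) = 1` to remove the scalar part yields
`‖(g(H) - 1) P‖ ≤ (δ / 2) |||g|||₃`. The same estimate with `P = 1` shows that the
Helffer–Sjöstrand integrand is integrable.
-/

open MeasureTheory

theorem ae_im_ne_zero : ∀ᵐ z : ℂ, z.im ≠ 0 := by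
  refine measure_mono_null (fun z hz => ?_)
    (Measure.addHaar_submodule volume (LinearMap.ker Complex.imLm) fun hker => ?_)
  · simpa using hz
  · have : Complex.I ∈ LinearMap.ker Complex.imLm := hker ▸ Submodule.mem_top
    simp at this

theorem ContinuousOn.of_mul_eq_one {X A : Type*} [TopologicalSpace X] [NormedRing A]
    [HasSummableGeomSeries A] {f g : X → A} {s : Set X} (hf : ContinuousOn f s)
    (hgf : ∀ x ∈ s, g x * f x = 1) (hfg : ∀ x ∈ s, f x * g x = 1) : ContinuousOn g s := by
  refine ContinuousOn.congr (f := Ring.inverse ∘ f) (fun x hx => ?_) fun x hx => ?_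
  · let u : Aˣ := ⟨f x, g x, hfg x hx, hgf x hx⟩
    exact ContinuousAt.comp_continuousWithinAt (g := Ring.inverse) (x := x)
      (NormedRing.inverse_continuousAt u) (hf x hx)
  · exact (Ring.inverse_unit ⟨f x, g x, hfg x hx, hgf x hx⟩).symm

theorem aestronglyMeasurable_of_integrable_mul_inv_sub {f : ℂ → ℂ} {w : ℂ}
    (hf : Integrable fun z => f z * (w - z)⁻¹) : AEStronglyMeasurable f := by
  refine AEStronglyMeasurable.congr (f := fun z => f z * (w - z)⁻¹ * (w - z))
    (hf.aestronglyMeasurable.mul (by fun_prop)) ?_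
  filter_upwards [Measure.ae_ne volume w] with z hz
  rw [mul_assoc, inv_mul_cancel₀ (sub_ne_zero.mpr hz.symm), mul_one]

section LeftInverse

variable {A : Type*} [NormedRing A] [NormedAlgebra ℂ A] {h r : A} {z : ℂ}

theorem sub_inv_smul_one_eq_of_mul_sub_smul_one_eq_one (hr : r * (h - z • 1) = 1) {w : ℂ}
    (hwz : w - z ≠ 0) : r - (w - z)⁻¹ • (1 : A) = -((w - z)⁻¹ • (r * (h - w • 1))) := by
  have hshift : r * (h - w • 1) = 1 - (w - z) • r := by
    rw [show h - w • (1 : A) = (h - z • 1) - (w - z) • 1 by rw [sub_smul]; abel, mul_sub, hr,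
      mul_smul_comm, mul_one]
  rw [hshift, smul_sub, smul_smul, inv_mul_cancel₀ hwz, one_smul, neg_sub]

theorem norm_sub_inv_smul_one_mul_le (hr : r * (h - z • 1) = 1) (hrz : ‖r‖ ≤ 1 / |z.im|)
    (hz : z.im ≠ 0) (E : ℝ) (b : A) :
    ‖(r - ((E : ℂ) - z)⁻¹ • 1) * b‖ ≤ ‖(h - (E : ℂ) • 1) * b‖ / |z.im| ^ 2 := by
  have him : 0 < |z.im| := abs_pos.mpr hz
  have hdist : |z.im| ≤ ‖(E : ℂ) - z‖ := by simpa using Complex.abs_im_le_norm ((E : ℂ) - z)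
  rw [sub_inv_smul_one_eq_of_mul_sub_smul_one_eq_one hr (norm_pos_iff.mp (him.trans_le hdist)),
    neg_mul, norm_neg, smul_mul_assoc, norm_smul, norm_inv, mul_assoc]
  calc ‖(E : ℂ) - z‖⁻¹ * ‖r * ((h - (E : ℂ) • 1) * b)‖
      ≤ |z.im|⁻¹ * (|z.im|⁻¹ * ‖(h - (E : ℂ) • 1) * b‖) := by
        gcongr
        refine (norm_mul_le _ _).trans ?_
        gcongr
        simpa using hrz
    _ = ‖(h - (E : ℂ) • 1) * b‖ / |z.im| ^ 2 := by ring

end LeftInverse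

section Resolvent

variable {A : Type*} [NormedRing A] [NormedAlgebra ℂ A] [CompleteSpace A] {h : A} {R : ℂ → A}

theorem aestronglyMeasurable_of_inverse_sub_smul_one
    (hRl : ∀ z : ℂ, z.im ≠ 0 → R z * (h - z • 1) = 1)
    (hRr : ∀ z : ℂ, z.im ≠ 0 → (h - z • 1) * R z = 1) : AEStronglyMeasurable R := by
  have hopen : IsOpen {z : ℂ | z.im ≠ 0} := isOpen_ne_fun Complex.continuous_im continuous_const
  have hcont : ContinuousOn R {z : ℂ | z.im ≠ 0} :=
    ContinuousOn.of_mul_eq_one (f := fun z => h - z • 1) (by fun_prop) hRl hRr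
  have hmeas := hcont.aestronglyMeasurable (μ := volume) hopen.measurableSet
  rwa [Measure.restrict_eq_self_of_ae_mem (s := {z : ℂ | z.im ≠ 0}) ae_im_ne_zero] at hmeas

theorem integrable_smul_sub_inv_smul_one (hRl : ∀ z : ℂ, z.im ≠ 0 → R z * (h - z • 1) = 1)
    (hRr : ∀ z : ℂ, z.im ≠ 0 → (h - z • 1) * R z = 1)
    (hRn : ∀ z : ℂ, z.im ≠ 0 → ‖R z‖ ≤ 1 / |z.im|) (E : ℝ) {dbar : ℂ → ℂ}
    (hdbar : AEStronglyMeasurable dbar) (hint : Integrable fun z : ℂ => ‖dbar z‖ / |z.im| ^ 2) :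
    Integrable fun z => dbar z • (R z - ((E : ℂ) - z)⁻¹ • (1 : A)) := by
  refine (hint.const_mul ‖h - (E : ℂ) • 1‖).mono' (hdbar.smul ?_) ?_
  · exact (aestronglyMeasurable_of_inverse_sub_smul_one hRl hRr).sub (by fun_prop)
  · filter_upwards [ae_im_ne_zero] with z hz
    have hbound := norm_sub_inv_smul_one_mul_le (hRl z hz) (hRn z hz) hz E 1
    rw [mul_one, mul_one] at hbound
    calc ‖dbar z • (R z - ((E : ℂ) - z)⁻¹ • 1)‖
        ≤ ‖dbar z‖ * (‖h - (E : ℂ) • 1‖ / |z.im| ^ 2) := by rw [norm_smul]; gcongr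
      _ = ‖h - (E : ℂ) • 1‖ * (‖dbar z‖ / |z.im| ^ 2) := by ring

end Resolvent

theorem helffer_sjostrand_nearly_spectral_general
    {𝓗 : Type*} [NormedAddCommGroup 𝓗] [InnerProductSpace ℂ 𝓗] [CompleteSpace 𝓗]
    (H P : 𝓗 →L[ℂ] 𝓗) (E : ℝ) (δ N₃ : ℝ)
    (dbar : ℂ → ℂ) (R : ℂ → 𝓗 →L[ℂ] 𝓗)
    -- resolvent data: `R z = (H − z)⁻¹` for `Im z ≠ 0`, with the standard bound
    (hR : ∀ z : ℂ, z.im ≠ 0 →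
      R z * (H - z • (1 : 𝓗 →L[ℂ] 𝓗)) = 1 ∧
      (H - z • (1 : 𝓗 →L[ℂ] 𝓗)) * R z = 1 ∧
      ‖R z‖ ≤ 1 / |z.im|)
    -- integrability and Helffer–Sjöstrand norm bound `|||g|||₃`
    (hint : Integrable (fun z : ℂ => ‖dbar z‖ / |z.im| ^ 2))
    (hN₃ : ∫ z : ℂ, ‖dbar z‖ / |z.im| ^ 2 ≤ N₃)
    -- `g(E) = 1`, expressed through the Helffer–Sjöstrand formula
    (hgE : ∫ z : ℂ, dbar z * ((E : ℂ) - z)⁻¹ = 1)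
    -- the near-eigenprojection property
    (hns : ‖(H - (E : ℂ) • (1 : 𝓗 →L[ℂ] 𝓗)) * P‖ ≤ δ / 2) :
    -- conclusion: `‖(g(H) − I)P‖ ≤ |||g|||₃ δ`, with `g(H)` given by the
    -- Helffer–Sjöstrand integral
    ‖(∫ z : ℂ, dbar z • R z) * P - P‖ ≤ N₃ * δ := by
  set D : ℂ → 𝓗 →L[ℂ] 𝓗 := fun z => R z - ((E : ℂ) - z)⁻¹ • 1
  have hgE_int : Integrable fun z : ℂ => dbar z * ((E : ℂ) - z)⁻¹ :=
    Integrable.of_integral_ne_zero (by rw [hgE]; exact one_ne_zero)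
  have hD_int : Integrable fun z => dbar z • D z :=
    integrable_smul_sub_inv_smul_one (fun z hz => (hR z hz).1) (fun z hz => (hR z hz).2.1)
      (fun z hz => (hR z hz).2.2) E (aestronglyMeasurable_of_integrable_mul_inv_sub hgE_int) hint
  have hsplit : (fun z => dbar z • R z) =
      fun z => (dbar z * ((E : ℂ) - z)⁻¹) • 1 + dbar z • D z := by
    ext1 z; rw [mul_smul, ← smul_add, add_sub_cancel]
  have hgH : (∫ z : ℂ, dbar z • R z) * P - P = ∫ z : ℂ, dbar z • (D z * P) := by
    rw [hsplit, integral_add (hgE_int.smul_const 1) hD_int, integral_smul_const, hgE, one_smul,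
      add_mul, one_mul, add_sub_cancel_left, ← integral_mul_const_of_integrable hD_int]
    simp_rw [smul_mul_assoc]
  have hpointwise : ∀ᵐ z : ℂ, ‖dbar z • (D z * P)‖ ≤ δ / 2 * (‖dbar z‖ / |z.im| ^ 2) := by
    filter_upwards [ae_im_ne_zero] with z hz
    have hbound := norm_sub_inv_smul_one_mul_le (hR z hz).1 (hR z hz).2.2 hz E P
    calc ‖dbar z • (D z * P)‖ ≤ ‖dbar z‖ * ((δ / 2) / |z.im| ^ 2) := by
          rw [norm_smul]; gcongr; exact hbound.trans (by gcongr)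
      _ = δ / 2 * (‖dbar z‖ / |z.im| ^ 2) := by ring
  have hδ : 0 ≤ δ := by linarith [norm_nonneg ((H - (E : ℂ) • (1 : 𝓗 →L[ℂ] 𝓗)) * P)]
  have hN₃_nonneg : 0 ≤ N₃ := (integral_nonneg fun z => by positivity).trans hN₃
  rw [hgH]
  calc ‖∫ z : ℂ, dbar z • (D z * P)‖ ≤ ∫ z : ℂ, δ / 2 * (‖dbar z‖ / |z.im| ^ 2) :=
        norm_integral_le_of_norm_le (hint.const_mul _) hpointwise
    _ = δ / 2 * ∫ z : ℂ, ‖dbar z‖ / |z.im| ^ 2 := integral_const_mul _ _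
    _ ≤ δ / 2 * N₃ := by gcongr
    _ ≤ N₃ * δ := by nlinarith

/-- If `‖(H − E)P‖ ≤ δ/2` and `g(E) = 1` for a `C⁴` compactly
supported `g`, then via the Helffer–Sjöstrand functional calculus
`g(H) = ∫_ℂ (∂_z̄ g̃)(z) (H − z)⁻¹ dz dz̄` one has
`‖(g(H) − I)P‖ ≤ C_g δ`, with `C_g` the Helffer–Sjöstrand norm `|||g|||₃`,
here a bound `N₃` for `∫ |∂_z̄ g̃(z)| |Im z|⁻² dz dz̄`. -/
theorem helffer_sjostrand_nearly_spectral
    {𝓗 : Type*} [NormedAddCommGroup 𝓗] [InnerProductSpace ℂ 𝓗] [CompleteSpace 𝓗]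
    (H P : 𝓗 →L[ℂ] 𝓗) (E : ℝ) (δ N₃ : ℝ)
    (dbar : ℂ → ℂ) (R : ℂ → 𝓗 →L[ℂ] 𝓗)
    (hH : IsSelfAdjoint H)
    (hproj : P * P = P) (hPsa : IsSelfAdjoint P)
    (hδ : 0 ≤ δ)
    -- resolvent data: `R z = (H − z)⁻¹` for `Im z ≠ 0`, with the standard bound
    (hR : ∀ z : ℂ, z.im ≠ 0 →
      R z * (H - z • (1 : 𝓗 →L[ℂ] 𝓗)) = 1 ∧
      (H - z • (1 : 𝓗 →L[ℂ] 𝓗)) * R z = 1 ∧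
      ‖R z‖ ≤ 1 / |z.im|)
    -- integrability and Helffer–Sjöstrand norm bound `|||g|||₃`
    (hint : Integrable (fun z : ℂ => ‖dbar z‖ / |z.im| ^ 2))
    (hN₃ : ∫ z : ℂ, ‖dbar z‖ / |z.im| ^ 2 ≤ N₃)
    -- `g(E) = 1`, expressed through the Helffer–Sjöstrand formula
    (hgE : ∫ z : ℂ, dbar z * ((E : ℂ) - z)⁻¹ = 1)
    -- the near-eigenprojection property
    (hns : ‖(H - (E : ℂ) • (1 : 𝓗 →L[ℂ] 𝓗)) * P‖ ≤ δ / 2) :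
    -- conclusion: `‖(g(H) − I)P‖ ≤ |||g|||₃ δ`, with `g(H)` given by the
    -- Helffer–Sjöstrand integral
    ‖(∫ z : ℂ, dbar z • R z) * P - P‖ ≤ N₃ * δ :=
  helffer_sjostrand_nearly_spectral_general H P E δ N₃ dbar R hR hint hN₃ hgE hns
end

section
/- Let H_Ω be a self-adjoint operator bounded below, with eigenvalue E and simple isolated spectrum structure: E separated by gap Δ. Let ψ be a unit vector in the range of the spectral projection P_Ω for E, and write ψ = ψ₁ + ψ₂ where ψ₂ = (I − F)ψ with F a smooth cutoff and suppose ⟨ψ₂, H_Ω ψ₂⟩ ≥ (E+b)‖ψ₂‖² and ‖[H_Ω,F]ψ‖ ≤ ε₀. Then b‖ψ₂‖² ≤ ε₀, i.e. ‖ψ₂‖² ≤ ε₀/b and ‖Fψ‖² ≥ 1 − 2√(ε₀/b). -/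
/-!
Since `H ψ = E ψ`, the tail `ψ₂ = (1 - F) ψ` satisfies `H ψ₂ = E ψ₂ - [H, F] ψ`, so
`⟪ψ₂, H ψ₂⟫ = E ‖ψ₂‖² - ⟪ψ₂, [H, F] ψ⟫`. Comparing with `⟪ψ₂, H ψ₂⟫ ≥ (E + b) ‖ψ₂‖²` gives
`b ‖ψ₂‖² ≤ ‖ψ₂‖ ‖[H, F] ψ‖ ≤ ε₀`, where `‖ψ₂‖ ≤ 1` because `0 ≤ 1 - F ≤ 1` forces `‖1 - F‖ ≤ 1`
in the C⋆-algebra of bounded operators. Finally `‖F ψ‖ ≥ 1 - ‖ψ₂‖ ≥ 1 - √(ε₀ / b)`.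
-/

open scoped InnerProductSpace

lemma ContinuousLinearMap.apply_sub_apply_of_apply_eq_smul {R M : Type*} [Ring R]
    [TopologicalSpace M] [AddCommGroup M] [IsTopologicalAddGroup M] [Module R M]
    {H F : M →L[R] M} {ψ : M} {E : R} (heig : H ψ = E • ψ) :
    H (ψ - F ψ) = E • (ψ - F ψ) - (H * F - F * H) ψ := by
  simp only [map_sub, sub_apply, mul_apply_eq_comp, heig, map_smul, smul_sub]
  abel

section

variable {𝓗 : Type*} [NormedAddCommGroup 𝓗] [InnerProductSpace ℂ 𝓗]

lemma re_inner_self_eq_norm_sq (v : 𝓗) : (⟪v, v⟫_ℂ).re = ‖v‖ ^ 2 :=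
  inner_self_eq_norm_sq (𝕜 := ℂ) v

namespace ContinuousLinearMap

lemma nonneg_of_re_inner_apply_nonneg [CompleteSpace 𝓗] {T : 𝓗 →L[ℂ] 𝓗}
    (hT : IsSelfAdjoint T) (h : ∀ v, 0 ≤ (⟪v, T v⟫_ℂ).re) : 0 ≤ T := by
  rw [nonneg_iff_isPositive, isPositive_def']
  refine ⟨hT, fun v => ?_⟩
  rw [reApplyInnerSelf_apply, inner_re_symm]
  exact h v

lemma le_one_of_re_inner_apply_le [CompleteSpace 𝓗] {T : 𝓗 →L[ℂ] 𝓗}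
    (hT : IsSelfAdjoint T) (h : ∀ v, (⟪v, T v⟫_ℂ).re ≤ ‖v‖ ^ 2) : T ≤ 1 := by
  rw [← sub_nonneg]
  refine nonneg_of_re_inner_apply_nonneg ((IsSelfAdjoint.one _).sub hT) fun v => ?_
  rw [sub_apply, one_apply_eq_self, inner_sub_right, Complex.sub_re, re_inner_self_eq_norm_sq]
  linarith [h v]

lemma norm_sub_apply_le [CompleteSpace 𝓗] {F : 𝓗 →L[ℂ] 𝓗} (hF0 : 0 ≤ F) (hF1 : F ≤ 1)
    (v : 𝓗) : ‖v - F v‖ ≤ ‖v‖ := by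
  have hnorm : ‖1 - F‖ ≤ 1 :=
    (CStarAlgebra.norm_le_one_iff_of_nonneg _ (sub_nonneg.mpr hF1)).mpr (sub_le_self _ hF0)
  simpa using (1 - F).le_of_opNorm_le hnorm v

lemma re_inner_apply_sub_apply_of_apply_eq_smul {H F : 𝓗 →L[ℂ] 𝓗} {ψ : 𝓗} {E : ℝ}
    (heig : H ψ = (E : ℂ) • ψ) :
    (⟪ψ - F ψ, H (ψ - F ψ)⟫_ℂ).re
      = E * ‖ψ - F ψ‖ ^ 2 - (⟪ψ - F ψ, (H * F - F * H) ψ⟫_ℂ).re := by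
  rw [apply_sub_apply_of_apply_eq_smul heig, inner_sub_right, inner_smul_right, Complex.sub_re,
    Complex.re_ofReal_mul, re_inner_self_eq_norm_sq]

end ContinuousLinearMap

end

open ContinuousLinearMap in
theorem eigenvector_localization_estimate_general
    {𝓗 : Type*} [NormedAddCommGroup 𝓗] [InnerProductSpace ℂ 𝓗] [CompleteSpace 𝓗]
    (H F : 𝓗 →L[ℂ] 𝓗) (ψ : 𝓗) (E b ε₀ : ℝ)
    (hF : IsSelfAdjoint F)
    -- `0 ≤ F ≤ I`
    (hF0 : ∀ v : 𝓗, 0 ≤ (⟪v, F v⟫_ℂ).re)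
    (hF1 : ∀ v : 𝓗, (⟪v, F v⟫_ℂ).re ≤ ‖v‖ ^ 2)
    (hb : 0 < b)
    (hψ : ‖ψ‖ = 1)
    (heig : H ψ = (E : ℂ) • ψ)
    -- `⟨ψ₂, H ψ₂⟩ ≥ (E + b)‖ψ₂‖²` for `ψ₂ = (I − F)ψ`
    (hJ : (E + b) * ‖ψ - F ψ‖ ^ 2 ≤ (⟪ψ - F ψ, H (ψ - F ψ)⟫_ℂ).re)
    -- `‖[H, F]ψ‖ ≤ ε₀`
    (hcomm : ‖(H * F - F * H) ψ‖ ≤ ε₀) :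
    b * ‖ψ - F ψ‖ ^ 2 ≤ ε₀ ∧
      ‖ψ - F ψ‖ ^ 2 ≤ ε₀ / b ∧
      1 - 2 * Real.sqrt (ε₀ / b) ≤ ‖F ψ‖ ^ 2 := by
  have htail : ‖ψ - F ψ‖ ≤ 1 :=
    hψ ▸ norm_sub_apply_le (nonneg_of_re_inner_apply_nonneg hF hF0)
      (le_one_of_re_inner_apply_le hF hF1) ψ
  have hcross : -(⟪ψ - F ψ, (H * F - F * H) ψ⟫_ℂ).re ≤ ε₀ :=
    calc -(⟪ψ - F ψ, (H * F - F * H) ψ⟫_ℂ).re ≤ ‖⟪ψ - F ψ, (H * F - F * H) ψ⟫_ℂ‖ :=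
          (neg_le_abs _).trans (Complex.abs_re_le_norm _)
      _ ≤ ‖ψ - F ψ‖ * ‖(H * F - F * H) ψ‖ := norm_inner_le_norm _ _
      _ ≤ 1 * ε₀ := mul_le_mul htail hcomm (norm_nonneg _) zero_le_one
      _ = ε₀ := one_mul ε₀
  have hmain : b * ‖ψ - F ψ‖ ^ 2 ≤ ε₀ := by
    linarith [re_inner_apply_sub_apply_of_apply_eq_smul (F := F) heig]
  have hsq : ‖ψ - F ψ‖ ^ 2 ≤ ε₀ / b := by rwa [le_div_iff₀ hb, mul_comm]
  have hsqrt : ‖ψ - F ψ‖ ≤ Real.sqrt (ε₀ / b) := Real.le_sqrt_of_sq_le hsq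
  have hFψ : 1 - ‖ψ - F ψ‖ ≤ ‖F ψ‖ := by
    linarith [hψ ▸ norm_sub_norm_le ψ (F ψ)]
  refine ⟨hmain, hsq, ?_⟩
  nlinarith [norm_nonneg (F ψ), sq_nonneg (1 - ‖ψ - F ψ‖)]

/-- Energy estimate for an eigenvector `ψ` of `H_Ω` with
eigenvalue `E`: writing `ψ = ψ₁ + ψ₂` with `ψ₂ = (I − F)ψ`, if
`⟨ψ₂, H_Ω ψ₂⟩ ≥ (E+b)‖ψ₂‖²` and `‖[H_Ω,F]ψ‖ ≤ ε₀`, then `b‖ψ₂‖² ≤ ε₀`,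
hence `‖ψ₂‖² ≤ ε₀/b` and `‖Fψ‖² ≥ 1 − 2√(ε₀/b)`. -/
theorem eigenvector_localization_estimate
    {𝓗 : Type*} [NormedAddCommGroup 𝓗] [InnerProductSpace ℂ 𝓗] [CompleteSpace 𝓗]
    (H F : 𝓗 →L[ℂ] 𝓗) (ψ : 𝓗) (E b ε₀ : ℝ)
    (hH : IsSelfAdjoint H) (hF : IsSelfAdjoint F)
    -- `0 ≤ F ≤ I`
    (hF0 : ∀ v : 𝓗, 0 ≤ (⟪v, F v⟫_ℂ).re)
    (hF1 : ∀ v : 𝓗, (⟪v, F v⟫_ℂ).re ≤ ‖v‖ ^ 2)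
    (hb : 0 < b) (hε₀ : 0 ≤ ε₀)
    (hψ : ‖ψ‖ = 1)
    (heig : H ψ = (E : ℂ) • ψ)
    -- `⟨ψ₂, H ψ₂⟩ ≥ (E + b)‖ψ₂‖²` for `ψ₂ = (I − F)ψ`
    (hJ : (E + b) * ‖ψ - F ψ‖ ^ 2 ≤ (⟪ψ - F ψ, H (ψ - F ψ)⟫_ℂ).re)
    -- `‖[H, F]ψ‖ ≤ ε₀`
    (hcomm : ‖(H * F - F * H) ψ‖ ≤ ε₀) :
    b * ‖ψ - F ψ‖ ^ 2 ≤ ε₀ ∧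
      ‖ψ - F ψ‖ ^ 2 ≤ ε₀ / b ∧
      1 - 2 * Real.sqrt (ε₀ / b) ≤ ‖F ψ‖ ^ 2 :=
  eigenvector_localization_estimate_general H F ψ E b ε₀ hF hF0 hF1 hb hψ heig hJ hcomm
end
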